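/- Let k ≥ 1 be an integer and n = 8k, and let a, b, c be the generators of the Weierstrass group W_n. Then c·a·b·a = [[1, 2], [1/(4k), (2k+1)/(2k)]] and c·b·a = −[[1, 8k+2], [0, 1]], and the element M = (c·a·b·a)·(c·b·a)^{k−1}·(c·a·b·a) of W_{8k} satisfies |tr M| = 4k + 1/(4k) > 2, and both (−4k, 1) and (4k−2, 1) are eigenvectors of M. Hence M is a hyperbolic element of W_{8k} whose fixed points on the boundary are the integers −4k and 4k−2, i.e. a special element of W_{8k}. -/

import Mathlib

/-!
In `W_n` the factors `√n` and `1/√n` of `b` and `c` cancel in `caba` and `cba`, and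
`cba = -[[1, n + 2], [0, 1]]` is (up to sign) a translation, so its powers are explicit.
For `n = 8k` this makes `M = ±(caba)·[[1, (k - 1)(8k + 2)], [0, 1]]·(caba)` an explicit matrix,
whose trace and eigenvectors `(-4k, 1)`, `(4k - 2, 1)` (eigenvalues `1/(4k)`, `4k`) are checked
directly.
-/
noncomputable section

open Matrix

abbrev SL2R := Matrix.SpecialLinearGroup (Fin 2) ℝ

/-- Generator `a` of the Weierstrass groups. -/
def Wa : SL2R := ⟨!![1, 2; -1, -1], by norm_num [Matrix.det_fin_two_of]⟩

/-- Generator `b = √n · [[1,1],[-(n+1)/n,-1]]` of the `n`-th Weierstrass group. -/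
def Wb (n : ℕ) (hn : 0 < n) : SL2R :=
  ⟨Real.sqrt n • !![1, 1; -((n : ℝ) + 1) / n, -1], by
    have h0 : (0:ℝ) ≤ n := Nat.cast_nonneg n
    have hne : (n : ℝ) ≠ 0 := Nat.cast_ne_zero.mpr hn.ne'
    have h : Real.sqrt n ^ 2 = n := Real.sq_sqrt h0
    rw [Matrix.det_smul]
    simp only [Matrix.det_fin_two_of, Fintype.card_fin]
    field_simp
    rw [h]; ring⟩

/-- Generator `c = (1/√n) · [[0,n],[-1,0]]` of the `n`-th Weierstrass group. -/
def Wc (n : ℕ) (hn : 0 < n) : SL2R :=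
  ⟨(1 / Real.sqrt n) • !![0, (n : ℝ); -1, 0], by
    have h0 : (0:ℝ) ≤ n := Nat.cast_nonneg n
    have hne : (n : ℝ) ≠ 0 := Nat.cast_ne_zero.mpr hn.ne'
    have h : Real.sqrt n ^ 2 = n := Real.sq_sqrt h0
    have hs : Real.sqrt n ≠ 0 := by
      intro hs; rw [hs] at h; simp at h; exact hne h.symm
    rw [Matrix.det_smul]
    simp only [Matrix.det_fin_two_of, Fintype.card_fin]
    field_simp
    rw [h]; ring⟩

/-- The `n`-th Weierstrass group. -/
def W (n : ℕ) (hn : 0 < n) : Subgroup SL2R :=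
  Subgroup.closure {Wa, Wb n hn, Wc n hn}

/-- `γ` fixes the boundary point `x ∈ ℝ`: `(x,1)` is an eigenvector of `γ`. -/
def FixesBoundary (γ : SL2R) (x : ℝ) : Prop :=
  ∃ t : ℝ, t ≠ 0 ∧ (γ : Matrix (Fin 2) (Fin 2) ℝ).mulVec ![x, 1] = t • ![x, 1]

/-- `γ` fixes the boundary point `∞`: `(1,0)` is an eigenvector of `γ`. -/
def FixesInfty (γ : SL2R) : Prop :=
  ∃ t : ℝ, t ≠ 0 ∧ (γ : Matrix (Fin 2) (Fin 2) ℝ).mulVec ![1, 0] = t • ![1, 0]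

/-- `γ ∈ SL(2,ℝ)` is parabolic: `γ ≠ ±1` and `|tr γ| = 2`. -/
def IsParabolic (γ : SL2R) : Prop :=
  γ ≠ 1 ∧ γ ≠ -1 ∧ |Matrix.trace (γ : Matrix (Fin 2) (Fin 2) ℝ)| = 2

/-- `γ ∈ SL(2,ℝ)` is hyperbolic: `|tr γ| > 2`. -/
def IsHyperbolic (γ : SL2R) : Prop :=
  2 < |Matrix.trace (γ : Matrix (Fin 2) (Fin 2) ℝ)|

/-- The element `M = (caba)·(cba)^{k−1}·(caba)` of the Weierstrass group `W_{8k}`. -/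
def specialW8k (k : ℕ) (hk : 1 ≤ k) : SL2R :=
  (Wc (8 * k) (by omega) * Wa * Wb (8 * k) (by omega) * Wa) *
    (Wc (8 * k) (by omega) * Wb (8 * k) (by omega) * Wa) ^ (k - 1) *
    (Wc (8 * k) (by omega) * Wa * Wb (8 * k) (by omega) * Wa)

theorem unipotent_pow {R : Type*} [Semiring R] (c : R) (j : ℕ) :
    !![1, c; 0, 1] ^ j = !![1, (j : R) * c; 0, 1] := by
  induction j with
  | zero => simp [one_fin_two]
  | succ j ih =>
    rw [pow_succ, ih, mul_fin_two]
    congrm !![?_, ?_; ?_, ?_] <;> simp [add_mul, add_comm]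

@[simp] theorem coe_Wa : ((Wa : SL2R) : Matrix (Fin 2) (Fin 2) ℝ) = !![1, 2; -1, -1] := rfl

section

variable (n : ℕ) (hn : 0 < n)

@[simp] theorem coe_Wb :
    ((Wb n hn : SL2R) : Matrix (Fin 2) (Fin 2) ℝ) = √n • !![1, 1; -((n : ℝ) + 1) / n, -1] := rfl

@[simp] theorem coe_Wc :
    ((Wc n hn : SL2R) : Matrix (Fin 2) (Fin 2) ℝ) = (1 / √n) • !![0, (n : ℝ); -1, 0] := rfl

theorem coe_Wc_mul_Wa_mul_Wb_mul_Wa :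
    ((Wc n hn * Wa * Wb n hn * Wa : SL2R) : Matrix (Fin 2) (Fin 2) ℝ) =
      !![1, 2; 2 / (n : ℝ), (n + 4) / n] := by
  have hn' : (n : ℝ) ≠ 0 := by positivity
  have hsqrt : √n * (1 / √n) = 1 := mul_one_div_cancel (by positivity)
  simp only [Matrix.SpecialLinearGroup.coe_mul, coe_Wa, coe_Wb, coe_Wc, Matrix.mul_smul,
    Matrix.smul_mul, smul_smul, hsqrt, one_smul, mul_fin_two]
  congrm !![?_, ?_; ?_, ?_] <;> field_simp <;> ring

theorem coe_Wc_mul_Wb_mul_Wa :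
    ((Wc n hn * Wb n hn * Wa : SL2R) : Matrix (Fin 2) (Fin 2) ℝ) = -!![1, (n : ℝ) + 2; 0, 1] := by
  have hn' : (n : ℝ) ≠ 0 := by positivity
  have hsqrt : √n * (1 / √n) = 1 := mul_one_div_cancel (by positivity)
  simp only [Matrix.SpecialLinearGroup.coe_mul, coe_Wa, coe_Wb, coe_Wc, Matrix.mul_smul,
    Matrix.smul_mul, smul_smul, hsqrt, one_smul, mul_fin_two, neg_of, neg_cons, neg_empty]
  congrm !![?_, ?_; ?_, ?_] <;> field_simp <;> ring

theorem Wa_mem_W : Wa ∈ W n hn := Subgroup.subset_closure (by simp)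

theorem Wb_mem_W : Wb n hn ∈ W n hn := Subgroup.subset_closure (by simp)

theorem Wc_mem_W : Wc n hn ∈ W n hn := Subgroup.subset_closure (by simp)

end

theorem fixesBoundary_of_coe_eq_smul {γ : SL2R} {N : Matrix (Fin 2) (Fin 2) ℝ} {s t x : ℝ}
    (hγ : (γ : Matrix (Fin 2) (Fin 2) ℝ) = s • N) (hs : s ≠ 0) (ht : t ≠ 0)
    (hN : N *ᵥ ![x, 1] = t • ![x, 1]) : FixesBoundary γ x :=
  ⟨s * t, mul_ne_zero hs ht, by rw [hγ, smul_mulVec, hN, smul_smul]⟩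

section

variable (k : ℕ) (hk : 1 ≤ k)

theorem coe_specialW8k :
    ((specialW8k k hk : SL2R) : Matrix (Fin 2) (Fin 2) ℝ) =
      (-1 : ℝ) ^ (k - 1) • !![2 * (k : ℝ) - 1 / 2, 8 * k ^ 2 - 2 * k - 1;
        1 / 2 + 1 / (8 * k), 2 * k + 1 / 2 + 1 / (4 * k)] := by
  have hk0 : (k : ℝ) ≠ 0 := Nat.cast_ne_zero.mpr (by omega)
  have hpred : ((k - 1 : ℕ) : ℝ) = k - 1 := by rw [Nat.cast_sub hk, Nat.cast_one]
  unfold specialW8k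
  rw [Matrix.SpecialLinearGroup.coe_mul, Matrix.SpecialLinearGroup.coe_mul,
    Matrix.SpecialLinearGroup.coe_pow, coe_Wc_mul_Wa_mul_Wb_mul_Wa, coe_Wc_mul_Wb_mul_Wa,
    ← neg_one_smul ℝ, smul_pow, unipotent_pow, mul_smul_comm, smul_mul_assoc, mul_fin_two, mul_fin_two, hpred]
  congrm _ • !![?_, ?_; ?_, ?_] <;> push_cast <;> field_simp <;> ring

theorem abs_trace_specialW8k :
    |trace ((specialW8k k hk : SL2R) : Matrix (Fin 2) (Fin 2) ℝ)| = 4 * k + 1 / (4 * k) := by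
  have hk0 : (k : ℝ) ≠ 0 := Nat.cast_ne_zero.mpr (by omega)
  rw [coe_specialW8k, trace_smul, trace_fin_two_of, smul_eq_mul, abs_mul, abs_pow, abs_neg,
    abs_one, one_pow, one_mul, ← abs_of_pos (by positivity : (0 : ℝ) < 4 * k + 1 / (4 * k))]
  congr 1
  field_simp
  ring

theorem isHyperbolic_specialW8k : IsHyperbolic (specialW8k k hk) := by
  have hk1 : (1 : ℝ) ≤ k := by exact_mod_cast hk
  have hinv : (0 : ℝ) < 1 / (4 * k) := by positivity
  unfold _root_.IsHyperbolic
  rw [abs_trace_specialW8k]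
  linarith

theorem fixesBoundary_specialW8k_neg : FixesBoundary (specialW8k k hk) (-(4 * k)) := by
  have hk0 : (k : ℝ) ≠ 0 := Nat.cast_ne_zero.mpr (by omega)
  refine fixesBoundary_of_coe_eq_smul (coe_specialW8k k hk)
    (pow_ne_zero _ (neg_ne_zero.mpr one_ne_zero)) (t := 1 / (4 * k)) (by positivity) ?_
  simp only [mulVec_fin_two, smul_vec2, of_apply, cons_val_zero, cons_val_one, cons_val_fin_one,
    smul_eq_mul]
  congrm ![?_, ?_] <;> field_simp <;> ring

theorem fixesBoundary_specialW8k_sub : FixesBoundary (specialW8k k hk) (4 * k - 2) := by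
  have hk0 : (k : ℝ) ≠ 0 := Nat.cast_ne_zero.mpr (by omega)
  refine fixesBoundary_of_coe_eq_smul (coe_specialW8k k hk)
    (pow_ne_zero _ (neg_ne_zero.mpr one_ne_zero)) (t := 4 * k) (by positivity) ?_
  simp only [mulVec_fin_two, smul_vec2, of_apply, cons_val_zero, cons_val_one, cons_val_fin_one,
    smul_eq_mul]
  congrm ![?_, ?_] <;> field_simp <;> ring

theorem specialW8k_mem_W : specialW8k k hk ∈ W (8 * k) (by omega) := by
  unfold specialW8k
  apply_rules [mul_mem, pow_mem, Wa_mem_W, Wb_mem_W, Wc_mem_W]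

end

/-- For `k ≥ 1` and `n = 8k`: `caba = [[1, 2], [1/(4k), (2k+1)/(2k)]]`,
`cba = −[[1, 8k+2], [0, 1]]`, and `M = (caba)·(cba)^{k−1}·(caba)` has
`|tr M| = 4k + 1/(4k) > 2` and eigenvectors `(−4k, 1)` and `(4k−2, 1)`; hence
`M` is a special (hyperbolic) element of `W_{8k}` fixing `−4k` and `4k−2`. -/
theorem weierstrass_8k_special (k : ℕ) (hk : 1 ≤ k) :
    (Wc (8 * k) (by omega) * Wa * Wb (8 * k) (by omega) * Wa =
      (⟨!![1, 2; 1 / (4 * (k : ℝ)), (2 * (k : ℝ) + 1) / (2 * (k : ℝ))], by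
        have hk' : (k : ℝ) ≠ 0 := by positivity
        norm_num [Matrix.det_fin_two_of]
        field_simp
        ring⟩ : SL2R)) ∧
    (Wc (8 * k) (by omega) * Wb (8 * k) (by omega) * Wa =
      -(show SL2R from
        ⟨!![1, 8 * (k : ℝ) + 2; 0, 1], by norm_num [Matrix.det_fin_two_of]⟩)) ∧
    |Matrix.trace ((specialW8k k hk : SL2R) : Matrix (Fin 2) (Fin 2) ℝ)| =
      4 * (k : ℝ) + 1 / (4 * (k : ℝ)) ∧
    IsHyperbolic (specialW8k k hk) ∧
    FixesBoundary (specialW8k k hk) (-(4 * (k : ℝ))) ∧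
    FixesBoundary (specialW8k k hk) (4 * (k : ℝ) - 2) ∧
    specialW8k k hk ∈ W (8 * k) (by omega) := by
  have hk0 : (k : ℝ) ≠ 0 := Nat.cast_ne_zero.mpr (by omega)
  refine ⟨Subtype.ext ?_, Subtype.ext ?_, abs_trace_specialW8k k hk, isHyperbolic_specialW8k k hk,
    fixesBoundary_specialW8k_neg k hk, fixesBoundary_specialW8k_sub k hk, specialW8k_mem_W k hk⟩
  · rw [coe_Wc_mul_Wa_mul_Wb_mul_Wa]
    congrm !![?_, ?_; ?_, ?_] <;> push_cast <;> field_simp <;> ring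
  · rw [coe_Wc_mul_Wb_mul_Wa, Matrix.SpecialLinearGroup.coe_neg]
    push_cast
    rfl
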